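/- The function $\rho(r)=H'(r)/H(r)$ satisfies the Riccati-type ODE $\rho'(r) = 1 - \rho(r)\left(\frac{n}{r}+\rho(r)\right)$ for all $r>0$. -/

import Mathlib

/-!
Differentiating under the integral sign, `H' = -∫ cos · e^{-r cos} sin^{n-1}` and
`H'' = ∫ cos² · e^{-r cos} sin^{n-1}`, so `ρ' = H''/H - ρ²`. Integrating the derivative of
`e^{-r cos x} sin^n x` over `[0, π]` gives `n H' = r (H - H'')`, i.e. `H''/H = 1 - (n/r) ρ`.
Since `H > 0`, this yields `ρ' = 1 - ρ (n/r + ρ)`.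
-/

open intervalIntegral Real Metric Set

theorem hasDerivAt_intervalIntegral_mul_exp_mul {f g : ℝ → ℝ} (hf : Continuous f)
    (hg : Continuous g) (a b r : ℝ) :
    HasDerivAt (fun s => ∫ x in a..b, f x * exp (s * g x))
      (∫ x in a..b, f x * g x * exp (r * g x)) r := by
  obtain ⟨C, hC⟩ :=
    (isCompact_closedBall r 1 |>.prod isCompact_uIcc).exists_bound_of_continuousOn
      (f := fun p : ℝ × ℝ => f p.2 * g p.2 * exp (p.1 * g p.2)) (by fun_prop)
  have hbound :
      ∀ᵐ x, x ∈ uIoc a b → ∀ s ∈ ball r 1, ‖f x * g x * exp (s * g x)‖ ≤ C :=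
    .of_forall fun x hx s hs => hC (s, x) ⟨ball_subset_closedBall hs, uIoc_subset_uIcc hx⟩
  have hdiff : ∀ᵐ x, x ∈ uIoc a b → ∀ s ∈ ball r 1,
      HasDerivAt (fun s => f x * exp (s * g x)) (f x * g x * exp (s * g x)) s :=
    .of_forall fun x _ s _ =>
      ((hasDerivAt_mul_const (g x)).exp.const_mul (f x)).congr_deriv (by ring)
  exact (hasDerivAt_integral_of_dominated_loc_of_deriv_le (ball_mem_nhds r one_pos)
    (.of_forall fun s =>
      (by fun_prop : Continuous fun x => f x * exp (s * g x)).aestronglyMeasurable)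
    ((by fun_prop : Continuous fun x => f x * exp (r * g x)).intervalIntegrable a b)
    (by fun_prop : Continuous fun x => f x * g x * exp (r * g x)).aestronglyMeasurable
    hbound intervalIntegrable_const hdiff).2

/-- With `m = n - 1`, the paper's `H`, `H'`, `H''` are `cosMoment m 0`, `-cosMoment m 1`,
`cosMoment m 2`. -/
noncomputable def cosMoment (m k : ℕ) (r : ℝ) : ℝ :=
  ∫ x in (0:ℝ)..π, cos x ^ k * exp (-(r * cos x)) * sin x ^ m

theorem hasDerivAt_cosMoment (m k : ℕ) (r : ℝ) :
    HasDerivAt (cosMoment m k) (-cosMoment m (k + 1) r) r := by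
  have h := hasDerivAt_intervalIntegral_mul_exp_mul (f := fun x => cos x ^ k * sin x ^ m)
    (g := fun x => -cos x) (by fun_prop) (by fun_prop) 0 π r
  have hfun :
      cosMoment m k = fun s => ∫ x in (0:ℝ)..π, cos x ^ k * sin x ^ m * exp (s * -cos x) := by
    ext s
    simp only [cosMoment, mul_neg]
    congr 1; ext x; ring
  rw [hfun]
  convert h using 1
  rw [cosMoment, ← integral_neg]
  congr 1; ext x
  simp only [mul_neg]
  ring

theorem cosMoment_zero_pos (m : ℕ) (r : ℝ) : 0 < cosMoment m 0 r := by
  refine intervalIntegral_pos_of_pos_on ((by fun_prop : Continuous _).intervalIntegrable 0 π)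
    (fun x hx => ?_) pi_pos
  have := sin_pos_of_pos_of_lt_pi hx.1 hx.2
  positivity

/-- Integrate `d/dx (exp (-r cos x) sin^(m+1) x)` over `[0, π]`: the boundary terms vanish, and
`sin² = 1 - cos²` turns the integral into moments. -/
theorem cosMoment_integration_by_parts (m : ℕ) (r : ℝ) :
    r * cosMoment m 2 r = r * cosMoment m 0 r + (m + 1) * cosMoment m 1 r := by
  have hint (k : ℕ) : IntervalIntegrable
      (fun x => cos x ^ k * exp (-(r * cos x)) * sin x ^ m) MeasureTheory.volume 0 π :=
    (by fun_prop : Continuous _).intervalIntegrable 0 π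
  have hderiv : ∀ x ∈ uIcc 0 π, HasDerivAt (fun x => exp (-(r * cos x)) * sin x ^ (m + 1))
      (r * (cos x ^ 0 * exp (-(r * cos x)) * sin x ^ m - cos x ^ 2 * exp (-(r * cos x)) * sin x ^ m)
        + (m + 1) * (cos x ^ 1 * exp (-(r * cos x)) * sin x ^ m)) x := by
    intro x _
    refine (((hasDerivAt_cos x).const_mul r).neg.exp.mul
      ((hasDerivAt_sin x).pow (m + 1))).congr_deriv ?_
    simp only [Pi.neg_apply, Pi.pow_apply]
    push_cast
    linear_combination (r * exp (-(r * cos x)) * sin x ^ m) * sin_sq_add_cos_sq x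
  have hftc := integral_eq_sub_of_hasDerivAt hderiv
    ((((hint 0).sub (hint 2)).const_mul r).add ((hint 1).const_mul _))
  rw [integral_add (((hint 0).sub (hint 2)).const_mul r) ((hint 1).const_mul _),
    integral_const_mul, integral_const_mul, integral_sub (hint 0) (hint 2)] at hftc
  simp only [sin_pi, sin_zero, zero_pow (Nat.succ_ne_zero m), mul_zero, sub_zero] at hftc
  unfold cosMoment
  linarith

/-- `ρ = H'/H` satisfies the Riccati-type ODE
`ρ'(r) = 1 - ρ(r)(n/r + ρ(r))` for all `r > 0`. -/
theorem stmt13 (n : ℕ) (hn : 1 ≤ n) (H H1 ρ : ℝ → ℝ)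
    (hH : ∀ r, H r = ∫ x in (0:ℝ)..π, Real.exp (-(r * Real.cos x)) * (Real.sin x) ^ (n - 1))
    (hH1 : ∀ r, H1 r =
      -∫ x in (0:ℝ)..π, Real.cos x * Real.exp (-(r * Real.cos x)) * (Real.sin x) ^ (n - 1))
    (hρ : ∀ r, ρ r = H1 r / H r) :
    ∀ r : ℝ, 0 < r → deriv ρ r = 1 - ρ r * ((n : ℝ) / r + ρ r) := by
  intro r hr
  obtain ⟨m, rfl⟩ := Nat.exists_eq_add_of_le' hn
  have hρ_eq : ρ = -cosMoment m 1 / cosMoment m 0 := by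
    ext s
    simp [hρ, hH, hH1, cosMoment]
  have hM0 := (cosMoment_zero_pos m r).ne'
  have hderiv := ((hasDerivAt_cosMoment m 1 r).neg.div (hasDerivAt_cosMoment m 0 r) hM0).deriv
  have hibp := cosMoment_integration_by_parts m r
  rw [hρ_eq, hderiv]
  simp only [Pi.div_apply, Pi.neg_apply]
  push_cast
  field_simp
  linear_combination cosMoment m 0 r * hibp
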